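/- arXiv:0801.1360 — 2 statements merged into one kernel-verified Lean document; each statement's English description precedes it below -/
import Mathlib

section
/- Let p be a prime, let n ≥ m ≥ 0 be integers, and let R_n = ℤ_p[[T_1,…,T_n]] denote the power series ring over the p-adic integers in n independent variables, with R_m regarded as a subring of R_n via the natural inclusion sending T_i to T_i for i ≤ m. Suppose A is an R_n-module that is finitely generated as an R_m-module (via restriction of scalars), and let h denote the height of the annihilator ideal of A in R_m. Then the height of the annihilator ideal of A in R_n is at least h + n − m. -/
/-- The height of a prime ideal `𝔭`: the supremum of the lengths of strictly increasing
chains of prime ideals contained in `𝔭`, i.e. the supremum of the number of prime ideals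
in a chain lying strictly below `𝔭`. -/
noncomputable def primeIdealHeight {R : Type*} [CommRing R] (𝔭 : Ideal R) : ℕ∞ :=
  Set.chainHeight {𝔮 : Ideal R | 𝔮.IsPrime ∧ 𝔮 < 𝔭} (· < ·)

/-- The height of an ideal `I`: the infimum of the heights of the prime ideals
containing `I`. -/
noncomputable def idealHeight {R : Type*} [CommRing R] (I : Ideal R) : ℕ∞ :=
  ⨅ (𝔭 : Ideal R) (_ : 𝔭.IsPrime) (_ : I ≤ 𝔭), primeIdealHeight 𝔭


noncomputable section

open MvPowerSeries

variable {R : Type*} [CommRing R] {k : ℕ}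

/-- restrict an exponent on `Fin (k+1)` to `Fin k` -/
def expDown (e : Fin (k+1) →₀ ℕ) : Fin k →₀ ℕ :=
  Finsupp.equivFunOnFinite.symm (fun i => e i.castSucc)

/-- combine an exponent on `Fin k` with an exponent for the last variable -/
def expUp (d : Fin k →₀ ℕ) (j : ℕ) : Fin (k+1) →₀ ℕ :=
  Finsupp.equivFunOnFinite.symm (Fin.snoc d j)

@[simp] lemma expDown_apply (e : Fin (k+1) →₀ ℕ) (i : Fin k) :
    expDown e i = e i.castSucc := by
  simp [expDown]

@[simp] lemma expUp_castSucc (d : Fin k →₀ ℕ) (j : ℕ) (i : Fin k) :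
    expUp d j i.castSucc = d i := by
  simp [expUp]

@[simp] lemma expUp_last (d : Fin k →₀ ℕ) (j : ℕ) :
    expUp d j (Fin.last k) = j := by
  simp [expUp]

@[simp] lemma expDown_expUp (d : Fin k →₀ ℕ) (j : ℕ) : expDown (expUp d j) = d := by
  ext i; simp

@[simp] lemma expUp_expDown_last (e : Fin (k+1) →₀ ℕ) : expUp (expDown e) (e (Fin.last k)) = e := by
  ext i
  refine Fin.lastCases ?_ ?_ i
  · simp
  · intro j; simp

lemma expUp_add (d d' : Fin k →₀ ℕ) (j j' : ℕ) :
    expUp (d + d') (j + j') = expUp d j + expUp d' j' := by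
  ext i
  refine Fin.lastCases ?_ ?_ i <;> simp

lemma expUp_eq_add_iff {d : Fin k →₀ ℕ} {j : ℕ} {u v : Fin (k+1) →₀ ℕ} :
    u + v = expUp d j ↔ (u (Fin.last k) + v (Fin.last k) = j ∧ expDown u + expDown v = d) := by
  constructor
  · rintro h
    constructor
    · have := congrArg (fun w => w (Fin.last k)) h; simpa using this
    · ext i
      have := congrArg (fun w => w i.castSucc) h; simpa using this
  · rintro ⟨h1, h2⟩
    have hu : u = expUp (expDown u) (u (Fin.last k)) := (expUp_expDown_last u).symm
    have hv : v = expUp (expDown v) (v (Fin.last k)) := (expUp_expDown_last v).symm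
    rw [hu, hv, ← expUp_add, h1, h2]


@[simp] lemma mvps_coeff_fun (g : (Fin k →₀ ℕ) → R) (d : Fin k →₀ ℕ) :
    coeff (R := R) d (g : MvPowerSeries (Fin k) R) = g d := rfl

@[simp] lemma expDown_zero : expDown (0 : Fin (k+1) →₀ ℕ) = 0 := by ext i; simp

@[simp] lemma expUp_zero : expUp (0 : Fin k →₀ ℕ) 0 = 0 := by
  ext i; refine Fin.lastCases ?_ ?_ i <;> simp

/-- underlying function of the splitting map -/
def sFun (f : MvPowerSeries (Fin (k+1)) R) : PowerSeries (MvPowerSeries (Fin k) R) :=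
  PowerSeries.mk fun j => ((fun d => coeff (R := R) (expUp d j) f) : MvPowerSeries (Fin k) R)

lemma sFun_coeff (f : MvPowerSeries (Fin (k+1)) R) (j : ℕ) (d : Fin k →₀ ℕ) :
    coeff (R := R) d (PowerSeries.coeff j (sFun f)) = coeff (R := R) (expUp d j) f := by
  exact congrArg (coeff (R := R) d) (PowerSeries.coeff_mk (R := MvPowerSeries (Fin k) R) j _)

lemma sFun_one : sFun (1 : MvPowerSeries (Fin (k+1)) R) = 1 := by
  classical
  ext j d
  rw [sFun_coeff, MvPowerSeries.coeff_one, PowerSeries.coeff_one]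
  by_cases hj : j = 0
  · subst hj
    rw [if_pos rfl, MvPowerSeries.coeff_one]
    by_cases hd : d = 0
    · subst hd; simp
    · rw [if_neg, if_neg hd]
      intro h
      apply hd
      have := congrArg expDown h
      simpa using this
  · rw [if_neg, if_neg hj, map_zero]
    intro h
    apply hj
    have := congrArg (fun w => w (Fin.last k)) h
    simpa using this

lemma sFun_mul (f g : MvPowerSeries (Fin (k+1)) R) : sFun (f * g) = sFun f * sFun g := by
  classical
  ext j d
  rw [sFun_coeff, PowerSeries.coeff_mul, map_sum, MvPowerSeries.coeff_mul]
  have : ∀ q ∈ Finset.HasAntidiagonal.antidiagonal j,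
      (MvPowerSeries.coeff (R := R) d) (PowerSeries.coeff (R := MvPowerSeries (Fin k) R) q.1 (sFun f)
          * PowerSeries.coeff (R := MvPowerSeries (Fin k) R) q.2 (sFun g))
      = ∑ x ∈ Finset.HasAntidiagonal.antidiagonal d,
          coeff (R := R) (expUp x.1 q.1) f * coeff (R := R) (expUp x.2 q.2) g := by
    intro q hq
    rw [MvPowerSeries.coeff_mul]
    exact Finset.sum_congr rfl fun x hx => by rw [sFun_coeff, sFun_coeff]
  rw [Finset.sum_congr rfl this, ← Finset.sum_product']
  refine Finset.sum_nbij' (fun u => ((u.1 (Fin.last k), u.2 (Fin.last k)), (expDown u.1, expDown u.2)))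
    (fun q => (expUp q.2.1 q.1.1, expUp q.2.2 q.1.2)) ?_ ?_ ?_ ?_ ?_
  · rintro ⟨u, v⟩ hu
    rw [Finset.HasAntidiagonal.mem_antidiagonal] at hu
    obtain ⟨h1, h2⟩ := expUp_eq_add_iff.mp hu
    simp only [Finset.mem_product, Finset.HasAntidiagonal.mem_antidiagonal]
    exact ⟨h1, h2⟩
  · rintro ⟨⟨j1, j2⟩, ⟨d1, d2⟩⟩ hq
    simp only [Finset.mem_product, Finset.HasAntidiagonal.mem_antidiagonal] at hq
    rw [Finset.HasAntidiagonal.mem_antidiagonal, ← expUp_add, hq.1, hq.2]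
  · rintro ⟨u, v⟩ hu; simp
  · rintro ⟨⟨j1, j2⟩, ⟨d1, d2⟩⟩ hq; simp
  · rintro ⟨u, v⟩ hu; simp

/-- The canonical ring hom from `(k+1)`-variable power series to power series over
`k`-variable power series. -/
def splitHom (R : Type*) [CommRing R] (k : ℕ) :
    MvPowerSeries (Fin (k+1)) R →+* PowerSeries (MvPowerSeries (Fin k) R) where
  toFun := sFun
  map_one' := sFun_one
  map_mul' := sFun_mul
  map_zero' := by ext j d; rw [sFun_coeff]; simp
  map_add' f g := by
    ext j d
    rw [sFun_coeff]
    show _ = coeff (R := R) d (PowerSeries.coeff j (sFun f) + PowerSeries.coeff j (sFun g))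
    rw [map_add, map_add, sFun_coeff, sFun_coeff]

lemma splitHom_coeff (f : MvPowerSeries (Fin (k+1)) R) (j : ℕ) (d : Fin k →₀ ℕ) :
    coeff (R := R) d (PowerSeries.coeff j (splitHom R k f)) = coeff (R := R) (expUp d j) f :=
  sFun_coeff f j d

lemma splitHom_bijective : Function.Bijective (splitHom R k) := by
  constructor
  · intro f g h
    ext e
    have := congrArg (fun w => coeff (R := R) (expDown e) (PowerSeries.coeff (e (Fin.last k)) w)) h
    simpa only [splitHom_coeff, expUp_expDown_last] using this
  · intro g
    refine ⟨(fun e => coeff (R := R) (expDown e) (PowerSeries.coeff (e (Fin.last k)) g) :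
      MvPowerSeries (Fin (k+1)) R), ?_⟩
    ext j d
    refine (splitHom_coeff _ j d).trans ?_
    show coeff (R := R) (expDown (expUp d j)) (PowerSeries.coeff ((expUp d j) (Fin.last k)) g) = _
    rw [expDown_expUp, expUp_last]

/-- The canonical ring equivalence. -/
def splitEquiv (R : Type*) [CommRing R] (k : ℕ) :
    MvPowerSeries (Fin (k+1)) R ≃+* PowerSeries (MvPowerSeries (Fin k) R) :=
  RingEquiv.ofBijective (splitHom R k) splitHom_bijective

lemma splitEquiv_coeff (f : MvPowerSeries (Fin (k+1)) R) (j : ℕ) (d : Fin k →₀ ℕ) :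
    coeff (R := R) d (PowerSeries.coeff j (splitEquiv R k f)) = coeff (R := R) (expUp d j) f :=
  splitHom_coeff f j d

lemma splitEquiv_symm_coeff (g : PowerSeries (MvPowerSeries (Fin k) R)) (e : Fin (k+1) →₀ ℕ) :
    coeff (R := R) e ((splitEquiv R k).symm g) =
      coeff (R := R) (expDown e) (PowerSeries.coeff (e (Fin.last k)) g) := by
  obtain ⟨f, rfl⟩ := (splitEquiv R k).surjective g
  rw [RingEquiv.symm_apply_apply]
  have := splitEquiv_coeff f (e (Fin.last k)) (expDown e)
  rw [this, expUp_expDown_last]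

end

noncomputable section
namespace HB

open PowerSeries

variable {S : Type*} [CommRing S]

lemma coeff_X_pow_mul_lt (w : PowerSeries S) {t j : ℕ} (h : j < t) :
    coeff (R := S) j (X ^ t * w) = 0 := by
  rw [PowerSeries.coeff_mul]
  apply Finset.sum_eq_zero
  rintro ⟨i1, i2⟩ hi
  rw [Finset.HasAntidiagonal.mem_antidiagonal] at hi
  rw [PowerSeries.coeff_X_pow, if_neg, zero_mul]
  omega

lemma coeff_X_pow_mul_ge (w : PowerSeries S) {t j : ℕ} (h : t ≤ j) :
    coeff (R := S) j (X ^ t * w) = coeff (R := S) (j - t) w := by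
  have h2 : (j - t) + t = j := by omega
  calc coeff (R := S) j (X ^ t * w) = coeff (R := S) ((j - t) + t) (X ^ t * w) := by rw [h2]
    _ = coeff (R := S) (j - t) w := PowerSeries.coeff_X_pow_mul w t (j - t)

lemma monomial_eq_C_mul_X_pow (c : S) (t : ℕ) : (monomial (R := S) t c) = C (R := S) c * X ^ t := by
  ext n
  rw [coeff_monomial, PowerSeries.coeff_C_mul, PowerSeries.coeff_X_pow]
  by_cases h : n = t <;> simp [h]

/-- ideal of `i`-th coefficients of elements of `I` of order `≥ i` -/
def ordIdeal (I : Ideal (PowerSeries S)) (i : ℕ) : Ideal S where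
  carrier := {a | ∃ f, f ∈ I ∧ coeff (R := S) i f = a ∧ ∀ j, j < i → coeff (R := S) j f = 0}
  zero_mem' := ⟨0, I.zero_mem, by simp, by simp⟩
  add_mem' := by
    rintro a b ⟨f, hf, hfa, hfl⟩ ⟨g, hg, hga, hgl⟩
    exact ⟨f + g, I.add_mem hf hg, by rw [map_add, hfa, hga],
      fun j hj => by rw [map_add, hfl j hj, hgl j hj, add_zero]⟩
  smul_mem' := by
    rintro c a ⟨f, hf, hfa, hfl⟩
    exact ⟨C (R := S) c * f, I.mul_mem_left _ hf, by rw [PowerSeries.coeff_C_mul, hfa]; rfl,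
      fun j hj => by rw [PowerSeries.coeff_C_mul, hfl j hj, mul_zero]⟩

lemma mem_ordIdeal {I : Ideal (PowerSeries S)} {i : ℕ} {a : S} :
    a ∈ ordIdeal I i ↔ ∃ f, f ∈ I ∧ coeff (R := S) i f = a ∧ ∀ j, j < i → coeff (R := S) j f = 0 :=
  Iff.rfl

lemma ordIdeal_mono (I : Ideal (PowerSeries S)) {i i' : ℕ} (h : i ≤ i') :
    ordIdeal I i ≤ ordIdeal I i' := by
  rintro a ⟨f, hf, hfa, hfl⟩
  refine ⟨X ^ (i' - i) * f, I.mul_mem_left _ hf, ?_, ?_⟩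
  · rw [coeff_X_pow_mul_ge _ (by omega)]
    rw [show i' - (i' - i) = i by omega, hfa]
  · intro j hj
    by_cases hji : j < i' - i
    · exact coeff_X_pow_mul_lt _ hji
    · rw [coeff_X_pow_mul_ge _ (by omega)]
      exact hfl _ (by omega)

variable (I : Ideal (PowerSeries S))

open Classical in
/-- a witness for membership in `ordIdeal I i` -/
def wit (i : ℕ) (a : S) : PowerSeries S :=
  if h : a ∈ ordIdeal I i then h.choose else 0

lemma wit_spec {i : ℕ} {a : S} (h : a ∈ ordIdeal I i) :
    wit I i a ∈ I ∧ coeff (R := S) i (wit I i a) = a ∧ ∀ j, j < i → coeff (R := S) j (wit I i a) = 0 := by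
  rw [wit, dif_pos h]
  exact h.choose_spec

variable [IsNoetherianRing S]

/-- a finite generating set of `ordIdeal I i` -/
def gens (i : ℕ) : Finset S := (IsNoetherian.noetherian (ordIdeal I i)).choose

lemma hgens (i : ℕ) : Ideal.span ↑(gens I i) = ordIdeal I i :=
  (IsNoetherian.noetherian (ordIdeal I i)).choose_spec

lemma gens_mem {i : ℕ} {a : S} (h : a ∈ gens I i) : a ∈ ordIdeal I i := by
  rw [← hgens I i]
  exact Ideal.subset_span h

/-- candidate finite generating set for `I` -/
def Gset (N : ℕ) : Set (PowerSeries S) := ⋃ i ∈ Set.Iic N, wit I i '' (gens I i : Set S)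

lemma Gset_finite (N : ℕ) : (Gset I N).Finite :=
  Set.Finite.biUnion (Set.finite_Iic N) (fun i _ => ((gens I i).finite_toSet.image _))

lemma Gset_subset (N : ℕ) : Gset I N ⊆ I := by
  rintro x hx
  simp only [Gset, Set.mem_iUnion, Set.mem_image] at hx
  obtain ⟨i, _, a, ha, rfl⟩ := hx
  exact (wit_spec I (gens_mem I ha)).1

lemma span_Gset_le (N : ℕ) : Ideal.span (Gset I N) ≤ I :=
  Ideal.span_le.mpr (Gset_subset I N)

lemma wit_mem_Gset {N i : ℕ} (hi : i ≤ N) {a : S} (ha : a ∈ gens I i) :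
    wit I i a ∈ Gset I N := by
  simp only [Gset, Set.mem_iUnion, Set.mem_image]
  exact ⟨i, hi, a, ha, rfl⟩

lemma clearance (N : ℕ) : ∀ t, t ≤ N → ∀ f ∈ I,
    ∃ g ∈ Ideal.span (Gset I N), ∀ j, j < t → coeff (R := S) j (f - g) = 0 := by
  intro t
  induction t with
  | zero => exact fun _ f _ => ⟨0, Ideal.zero_mem _, fun j hj => by omega⟩
  | succ t ih =>
    intro ht f hf
    obtain ⟨g, hg, hcl⟩ := ih (by omega) f hf
    have hfg : f - g ∈ I := I.sub_mem hf (span_Gset_le I N hg)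
    have hmem : coeff (R := S) t (f - g) ∈ ordIdeal I t := ⟨f - g, hfg, rfl, hcl⟩
    rw [← hgens I t] at hmem
    obtain ⟨c, -, hc⟩ := Submodule.mem_span_finset.mp hmem
    refine ⟨g + ∑ a ∈ gens I t, C (R := S) (c a) * wit I t a, ?_, ?_⟩
    · refine Ideal.add_mem _ hg (Submodule.sum_mem _ fun a ha => ?_)
      exact Ideal.mul_mem_left _ _ (Ideal.subset_span (wit_mem_Gset I (by omega) ha))
    · intro j hj
      have exp : f - (g + ∑ a ∈ gens I t, C (R := S) (c a) * wit I t a)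
          = (f - g) - ∑ a ∈ gens I t, C (R := S) (c a) * wit I t a := by ring
      rw [exp, map_sub, map_sum]
      by_cases hjt : j = t
      · rw [hjt]
        have hterm : ∀ a ∈ gens I t, coeff (R := S) t (C (R := S) (c a) * wit I t a) = c a • a := by
          intro a ha
          rw [PowerSeries.coeff_C_mul, (wit_spec I (gens_mem I ha)).2.1, smul_eq_mul]
        rw [Finset.sum_congr rfl hterm, hc, sub_self]
      · have hjt' : j < t := by omega
        have hterm : ∀ a ∈ gens I t, coeff (R := S) j (C (R := S) (c a) * wit I t a) = 0 := by
          intro a ha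
          rw [PowerSeries.coeff_C_mul, (wit_spec I (gens_mem I ha)).2.2 j hjt', mul_zero]
        rw [hcl j hjt', Finset.sum_congr rfl hterm, Finset.sum_const_zero, sub_zero]

section Tail

variable (N : ℕ)

lemma tail_mem_span (hstab : ∀ t, ordIdeal I (N + t) = ordIdeal I N)
    (t : ℕ) (g : PowerSeries S) (hgI : g ∈ I)
    (hgl : ∀ j, j < N + t → coeff (R := S) j g = 0) :
    coeff (R := S) (N + t) g ∈ Ideal.span (↑(gens I N) : Set S) := by
  have h1 : coeff (R := S) (N + t) g ∈ ordIdeal I (N + t) := ⟨g, hgI, rfl, hgl⟩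
  rw [hstab t] at h1
  rw [hgens I N]
  exact h1

variable (hstab : ∀ t, ordIdeal I (N + t) = ordIdeal I N)
  (f : PowerSeries S) (hf : f ∈ I) (hlow : ∀ j, j < N → coeff (R := S) j f = 0)

include hstab in
/-- data at each step of the remainder sequence -/
def RemStep (t : ℕ) (g : {g : PowerSeries S // g ∈ I ∧ ∀ j, j < N + t → coeff (R := S) j g = 0}) :
    {g : PowerSeries S // g ∈ I ∧ ∀ j, j < N + (t + 1) → coeff (R := S) j g = 0} := by
  refine ⟨g.1 - ∑ a ∈ gens I N, C (R := S) (Classical.choose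
      (Submodule.mem_span_finset.mp (tail_mem_span I N hstab t g.1 g.2.1 g.2.2)) a)
      * (X ^ t * wit I N a), ?_, ?_⟩
  · exact I.sub_mem g.2.1 (Submodule.sum_mem _ fun a ha =>
      Ideal.mul_mem_left _ _ (Ideal.mul_mem_left _ _ (wit_spec I (gens_mem I ha)).1))
  · intro j hj
    rw [map_sub, map_sum]
    set c := Classical.choose (Submodule.mem_span_finset.mp (tail_mem_span I N hstab t g.1 g.2.1 g.2.2))
      with hcdef
    by_cases hjt : j = N + t
    · rw [hjt]
      have hc := (Classical.choose_spec
        (Submodule.mem_span_finset.mp (tail_mem_span I N hstab t g.1 g.2.1 g.2.2))).2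
      rw [← hcdef] at hc
      have hterm : ∀ a ∈ gens I N, coeff (R := S) (N + t) (C (R := S) (c a) * (X ^ t * wit I N a))
          = c a • a := by
        intro a ha
        rw [PowerSeries.coeff_C_mul, coeff_X_pow_mul_ge _ (by omega),
          show N + t - t = N by omega, (wit_spec I (gens_mem I ha)).2.1, smul_eq_mul]
      rw [Finset.sum_congr rfl hterm, hc, sub_self]
    · have hj' : j < N + t := by omega
      have hterm : ∀ a ∈ gens I N, coeff (R := S) j (C (R := S) (c a) * (X ^ t * wit I N a)) = 0 := by
        intro a ha
        by_cases hjlt : j < t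
        · rw [PowerSeries.coeff_C_mul, coeff_X_pow_mul_lt _ hjlt, mul_zero]
        · rw [PowerSeries.coeff_C_mul, coeff_X_pow_mul_ge _ (by omega),
            (wit_spec I (gens_mem I ha)).2.2 _ (by omega), mul_zero]
      rw [g.2.2 j hj', Finset.sum_congr rfl hterm, Finset.sum_const_zero, sub_zero]

/-- the remainder sequence -/
def Rem (t : ℕ) : {g : PowerSeries S // g ∈ I ∧ ∀ j, j < N + t → coeff (R := S) j g = 0} :=
  Nat.rec ⟨f, hf, fun j hj => hlow j hj⟩ (fun t g => RemStep I N hstab t g) t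

/-- the chosen coefficients -/
def csel (t : ℕ) : S → S :=
  Classical.choose (Submodule.mem_span_finset.mp (tail_mem_span I N hstab t
    (Rem I N hstab f hf hlow t).1 (Rem I N hstab f hf hlow t).2.1 (Rem I N hstab f hf hlow t).2.2))

lemma Rem_succ (t : ℕ) : (Rem I N hstab f hf hlow (t + 1)).1
    = (Rem I N hstab f hf hlow t).1
      - ∑ a ∈ gens I N, C (R := S) (csel I N hstab f hf hlow t a) * (X ^ t * wit I N a) := rfl

lemma csel_spec (t : ℕ) : ∑ a ∈ gens I N, csel I N hstab f hf hlow t a • a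
    = coeff (R := S) (N + t) (Rem I N hstab f hf hlow t).1 :=
  (Classical.choose_spec (Submodule.mem_span_finset.mp (tail_mem_span I N hstab t
    (Rem I N hstab f hf hlow t).1 (Rem I N hstab f hf hlow t).2.1 (Rem I N hstab f hf hlow t).2.2))).2

lemma trunc_zero' (φ : PowerSeries S) : trunc 0 φ = 0 := by
  ext n
  rw [PowerSeries.coeff_trunc]
  simp

lemma Rem_partial : ∀ T : ℕ, f = (Rem I N hstab f hf hlow T).1
    + ∑ a ∈ gens I N,
        (↑(trunc T (PowerSeries.mk fun t => csel I N hstab f hf hlow t a)) : PowerSeries S)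
          * wit I N a := by
  intro T
  induction T with
  | zero =>
    have : ∀ a ∈ gens I N,
        (↑(trunc 0 (PowerSeries.mk fun t => csel I N hstab f hf hlow t a)) : PowerSeries S)
          * wit I N a = 0 := by
      intro a ha
      rw [trunc_zero', Polynomial.coe_zero, zero_mul]
    rw [Finset.sum_congr rfl this, Finset.sum_const_zero, add_zero]
    rfl
  | succ T ih =>
    rw [Rem_succ]
    have hterm : ∀ a ∈ gens I N,
        (↑(trunc (T + 1) (PowerSeries.mk fun t => csel I N hstab f hf hlow t a)) : PowerSeries S)
          * wit I N a
        = (↑(trunc T (PowerSeries.mk fun t => csel I N hstab f hf hlow t a)) : PowerSeries S)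
            * wit I N a
          + C (R := S) (csel I N hstab f hf hlow T a) * (X ^ T * wit I N a) := by
      intro a ha
      rw [show T + 1 = Nat.succ T from rfl, trunc_succ, Polynomial.coe_add,
        Polynomial.coe_monomial, coeff_mk, monomial_eq_C_mul_X_pow, add_mul]
      ring
    rw [Finset.sum_congr rfl hterm, Finset.sum_add_distrib]
    conv_lhs => rw [ih]
    abel

include hstab hf hlow in
lemma tail : f ∈ Ideal.span (Gset I N) := by
  have key : f = ∑ a ∈ gens I N,
      (PowerSeries.mk fun t => csel I N hstab f hf hlow t a) * wit I N a := by
    refine PowerSeries.ext fun q => ?_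
    have hp := congrArg (coeff (R := S) q) (Rem_partial I N hstab f hf hlow (q + 1))
    rw [map_add, map_sum] at hp
    rw [hp, map_sum, (Rem I N hstab f hf hlow (q + 1)).2.2 q (by omega), zero_add]
    refine Finset.sum_congr rfl fun a ha => ?_
    rw [PowerSeries.coeff_mul, PowerSeries.coeff_mul]
    refine Finset.sum_congr rfl fun x hx => ?_
    rw [Finset.HasAntidiagonal.mem_antidiagonal] at hx
    rw [Polynomial.coeff_coe, PowerSeries.coeff_trunc, if_pos (by omega), coeff_mk]
  rw [key]
  exact Submodule.sum_mem _ fun a ha =>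
    Ideal.mul_mem_left _ _ (Ideal.subset_span (wit_mem_Gset I le_rfl ha))

end Tail

theorem isNoetherianRing_powerSeries : IsNoetherianRing (PowerSeries S) := by
  rw [isNoetherianRing_iff_ideal_fg]
  intro I
  obtain ⟨N, hN⟩ := monotone_stabilizes_iff_noetherian.mpr inferInstance
    ⟨fun i => ordIdeal I i, fun i i' h => ordIdeal_mono I h⟩
  have hstab : ∀ t, ordIdeal I (N + t) = ordIdeal I N := fun t => (hN (N + t) (by omega)).symm
  refine Submodule.fg_def.mpr ⟨Gset I N, Gset_finite I N, le_antisymm (span_Gset_le I N) ?_⟩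
  intro f hf
  obtain ⟨g, hg, hcl⟩ := clearance I N N le_rfl f hf
  have h2 : f - g ∈ Ideal.span (Gset I N) :=
    tail I N hstab (f - g) (I.sub_mem hf (span_Gset_le I N hg)) hcl
  have := Submodule.add_mem _ hg h2
  rwa [add_sub_cancel] at this

end HB

end
noncomputable section
namespace ONE

open PowerSeries

lemma monomial_eq_C_mul_X_pow' {S : Type*} [CommRing S] (c : S) (t : ℕ) :
    (monomial (R := S) t c) = C (R := S) c * X ^ t := by
  ext n
  rw [coeff_monomial, PowerSeries.coeff_C_mul, PowerSeries.coeff_X_pow]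
  by_cases h : n = t <;> simp [h]

lemma idealHeight_le {T : Type*} [CommRing T] {I 𝔮 : Ideal T} (h1 : 𝔮.IsPrime) (h2 : I ≤ 𝔮) :
    idealHeight I ≤ primeIdealHeight 𝔮 :=
  iInf_le_of_le 𝔮 (iInf_le_of_le h1 (iInf_le_of_le h2 le_rfl))

lemma le_idealHeight {T : Type*} [CommRing T] {I : Ideal T} {x : ℕ∞}
    (h : ∀ 𝔭 : Ideal T, 𝔭.IsPrime → I ≤ 𝔭 → x ≤ primeIdealHeight 𝔭) : x ≤ idealHeight I :=
  le_iInf fun 𝔭 => le_iInf fun h1 => le_iInf fun h2 => h 𝔭 h1 h2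

section K

variable {S : Type*} [CommRing S]

/-- the ideal of power series all of whose coefficients lie in `q` -/
def Kker (q : Ideal S) : Ideal (PowerSeries S) :=
  RingHom.ker (PowerSeries.map (Ideal.Quotient.mk q))

lemma mem_Kker {q : Ideal S} {f : PowerSeries S} :
    f ∈ Kker q ↔ ∀ i, coeff (R := S) i f ∈ q := by
  rw [Kker, RingHom.mem_ker]
  constructor
  · intro h i
    have := congrArg (coeff (R := S ⧸ q) i) h
    rw [PowerSeries.coeff_map, map_zero, Ideal.Quotient.eq_zero_iff_mem] at this
    exact this
  · intro h
    ext i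
    rw [PowerSeries.coeff_map, map_zero, Ideal.Quotient.eq_zero_iff_mem]
    exact h i

lemma Kker_isPrime {q : Ideal S} (hq : q.IsPrime) : (Kker q).IsPrime :=
  RingHom.ker_isPrime _

lemma C_mem_Kker_iff {q : Ideal S} {a : S} : C (R := S) a ∈ Kker q ↔ a ∈ q := by
  rw [mem_Kker]
  constructor
  · intro h
    have := h 0
    rwa [PowerSeries.coeff_zero_C] at this
  · intro h i
    rw [PowerSeries.coeff_C]
    split <;> simp [h]

lemma Kker_lt_Kker {q q' : Ideal S} (h : q < q') : Kker q < Kker q' := by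
  refine lt_of_le_of_ne (fun f hf => mem_Kker.mpr fun i => h.le (mem_Kker.mp hf i)) ?_
  obtain ⟨a, ha', ha⟩ := SetLike.exists_of_lt h
  intro heq
  exact ha (C_mem_Kker_iff.mp (heq ▸ C_mem_Kker_iff.mpr ha'))

lemma Kker_le_of_C_mem [IsNoetherianRing S] {q : Ideal S} {P : Ideal (PowerSeries S)}
    (hqP : ∀ a ∈ q, C (R := S) a ∈ P) : Kker q ≤ P := by
  intro f hf
  obtain ⟨s, hs⟩ := IsNoetherian.noetherian q
  have hcoef : ∀ i, ∃ c : S → S, ∑ a ∈ s, c a • a = coeff (R := S) i f := fun i =>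
    (Submodule.mem_span_finset.mp (by rw [hs]; exact mem_Kker.mp hf i)).imp fun _ h => h.2
  choose c hc using hcoef
  have key : f = ∑ a ∈ s, C (R := S) a * PowerSeries.mk (fun i => c i a) := by
    ext i
    rw [map_sum]
    have hterm : ∀ a ∈ s, coeff (R := S) i (C (R := S) a * PowerSeries.mk fun i => c i a) = c i a • a :=
      fun a ha => by rw [PowerSeries.coeff_C_mul, coeff_mk, smul_eq_mul, mul_comm]
    rw [Finset.sum_congr rfl hterm, hc i]
  rw [key]
  exact Submodule.sum_mem _ fun a ha =>
    Ideal.mul_mem_right _ _ (hqP a (by rw [← hs]; exact Ideal.subset_span ha))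

end K

/-- chain extension lemma -/
lemma primeIdealHeight_add_one_le {T T' : Type*} [CommRing T] [CommRing T']
    {𝔮 : Ideal T} {𝔭 : Ideal T'} (K : Ideal T → Ideal T')
    (hprime : ∀ q : Ideal T, q.IsPrime → (K q).IsPrime)
    (hmono : ∀ q q' : Ideal T, q < q' → K q < K q')
    (h𝔮 : 𝔮.IsPrime) (htop : K 𝔮 < 𝔭) :
    primeIdealHeight 𝔮 + 1 ≤ primeIdealHeight 𝔭 := by
  have key : ∀ n : ℕ, (n : ℕ∞) ≤ primeIdealHeight 𝔮 →
      ((n : ℕ∞) + 1) ≤ primeIdealHeight 𝔭 := by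
    intro n hn
    unfold primeIdealHeight at hn ⊢
    obtain ⟨t, hts, htn, htc⟩ := Set.exists_isChain_of_le_chainHeight n hn
    have hinj : Set.InjOn K t := by
      intro a ha b hb hab
      by_contra hne
      rcases htc ha hb hne with h | h
      · exact (hmono a b h).ne hab
      · exact (hmono b a h).ne hab.symm
    have hnot : K 𝔮 ∉ K '' t := by
      rintro ⟨a, ha, hEq⟩
      exact (hmono a 𝔮 (hts ha).2).ne hEq
    have henc : (insert (K 𝔮) (K '' t)).encard = (n : ℕ∞) + 1 := by
      rw [Set.encard_insert_of_notMem hnot, hinj.encard_image, htn]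
    rw [← henc]
    apply Set.encard_le_chainHeight_of_isChain
    · intro x hx
      rcases hx with rfl | ⟨a, ha, rfl⟩
      · exact ⟨hprime _ h𝔮, htop⟩
      · exact ⟨hprime a (hts ha).1, lt_trans (hmono _ _ (hts ha).2) htop⟩
    · have hc : IsChain (· < ·) (K '' t) :=
        IsChain.image_of_map_rel (· < ·) (· < ·) K (fun a b h => hmono a b h) htc
      refine hc.insert fun b hb _ => Or.inr ?_
      obtain ⟨a, ha, rfl⟩ := hb
      exact hmono _ _ (hts ha).2
  cases hq : primeIdealHeight 𝔮 using ENat.recTopCoe with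
  | top =>
    rw [top_add, top_le_iff]
    by_contra hne
    obtain ⟨k, hk⟩ := ENat.ne_top_iff_exists.mp hne
    have := key k (by rw [hq]; exact le_top)
    rw [← hk] at this
    exact absurd this (by exact_mod_cast Nat.not_succ_le_self k)
  | coe n => exact key n (le_of_eq hq.symm)


theorem one_step {S T : Type*} [CommRing S] [IsNoetherianRing S] [CommRing T]
    (e : PowerSeries S ≃+* T) (A : Type*) [AddCommGroup A] [Module T A] [Module S A]
    [Module.Finite S A]
    (hc : ∀ (s : S) (x : A), s • x = e (C (R := S) s) • x) :
    idealHeight (Module.annihilator S A) + 1 ≤ idealHeight (Module.annihilator T A) := by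
  refine le_idealHeight fun 𝔭 hp hann => ?_
  have hp' : (Ideal.comap (e : PowerSeries S →+* T) 𝔭).IsPrime := Ideal.comap_isPrime _ _
  set 𝔭' := Ideal.comap (e : PowerSeries S →+* T) 𝔭 with h𝔭'def
  have h𝔮 : (Ideal.comap (C (R := S)) 𝔭').IsPrime := Ideal.comap_isPrime _ _
  set 𝔮 := Ideal.comap (C (R := S)) 𝔭' with h𝔮def
  -- the annihilator of A in S is contained in 𝔮
  have hannS : Module.annihilator S A ≤ 𝔮 := by
    intro s hs
    rw [Module.mem_annihilator] at hs
    show C (R := S) s ∈ 𝔭'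
    show e (C (R := S) s) ∈ 𝔭
    apply hann
    rw [Module.mem_annihilator]
    intro x
    rw [← hc]
    exact hs x
  have h1 : idealHeight (Module.annihilator S A) ≤ primeIdealHeight 𝔮 := idealHeight_le h𝔮 hannS
  -- the multiplication-by-X endomorphism
  let φ : Module.End S A :=
    { toFun := fun x => e X • x
      map_add' := fun x y => smul_add _ x y
      map_smul' := fun s x => by
        simp only [RingHom.id_apply]
        rw [hc s x, hc s (e X • x), ← mul_smul, ← mul_smul, mul_comm] }
  have hφ : ∀ x : A, φ x = e X • x := fun x => rfl
  obtain ⟨pl, hmonic, haeval⟩ := LinearMap.exists_monic_and_aeval_eq_zero S φ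
  have hXpow : ∀ (k : ℕ) (x : A), (e (X ^ k)) • x = (φ ^ k) x := by
    intro k
    induction k with
    | zero => intro x; rw [pow_zero, pow_zero, map_one, one_smul, Module.End.one_apply]
    | succ k ih =>
      intro x
      rw [pow_succ, pow_succ, map_mul, mul_smul, Module.End.mul_apply, ih (e X • x), ← hφ x]
  have haev : ∀ (g : Polynomial S) (x : A),
      (e (g : PowerSeries S)) • x = (Polynomial.aeval φ) g x := by
    intro g
    induction g using Polynomial.induction_on' with
    | add p q hp hq =>
      intro x
      rw [Polynomial.coe_add, map_add, add_smul, map_add, LinearMap.add_apply, hp, hq]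
    | monomial n a =>
      intro x
      rw [Polynomial.coe_monomial, monomial_eq_C_mul_X_pow', map_mul, mul_smul, hXpow,
        ← hc, Polynomial.aeval_monomial, Module.End.mul_apply, Module.algebraMap_end_apply]
  -- the monic image annihilates A
  have hFann : e (pl : PowerSeries S) ∈ Module.annihilator T A := by
    rw [Module.mem_annihilator]
    intro x
    rw [haev, haeval]
    rfl
  have hF1 : (pl : PowerSeries S) ∉ Kker 𝔮 := by
    intro h
    have := mem_Kker.mp h pl.natDegree
    rw [Polynomial.coeff_coe, Polynomial.Monic.coeff_natDegree hmonic] at this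
    exact h𝔮.ne_top (Ideal.eq_top_of_isUnit_mem _ this isUnit_one)
  -- transfer K along e
  let K : Ideal S → Ideal T := fun q => Ideal.comap (e.symm : T →+* PowerSeries S) (Kker q)
  have hKmem : ∀ (q : Ideal S) (f : PowerSeries S), e f ∈ K q ↔ f ∈ Kker q := by
    intro q f
    rw [Ideal.mem_comap]
    simp
  have hKprime : ∀ q : Ideal S, q.IsPrime → (K q).IsPrime := by
    intro q hq
    have := Kker_isPrime hq
    exact Ideal.comap_isPrime _ _
  have hKmono : ∀ q q' : Ideal S, q < q' → K q < K q' := by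
    intro q q' h
    have h2 := Kker_lt_Kker h
    constructor
    · exact Ideal.comap_mono h2.le
    · intro hle
      apply h2.not_ge
      intro f hf
      have := hle ((hKmem q' f).mpr hf)
      exact (hKmem q f).mp this
  have htop : K 𝔮 < 𝔭 := by
    have hle : K 𝔮 ≤ 𝔭 := by
      intro y hy
      have h3 : e.symm y ∈ Kker 𝔮 := hy
      have h4 : Kker 𝔮 ≤ 𝔭' := Kker_le_of_C_mem fun a ha => ha
      have h5 : e.symm y ∈ 𝔭' := h4 h3
      have h6 : e (e.symm y) ∈ 𝔭 := h5
      rwa [RingEquiv.apply_symm_apply] at h6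
    refine lt_of_le_of_ne hle ?_
    intro heq
    apply hF1
    have : e (pl : PowerSeries S) ∈ K 𝔮 := heq ▸ hann hFann
    exact (hKmem _ _).mp this
  calc idealHeight (Module.annihilator S A) + 1 ≤ primeIdealHeight 𝔮 + 1 :=
        add_le_add_left h1 1
    _ ≤ primeIdealHeight 𝔭 := primeIdealHeight_add_one_le K hKprime hKmono h𝔮 htop

end ONE

end

noncomputable section
namespace GLUE

open MvPowerSeries

variable {R : Type*} [CommRing R]

/-- power series ring in 0 variables -/
def zeroEquiv (R : Type*) [CommRing R] : MvPowerSeries (Fin 0) R ≃+* R := by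
  refine RingEquiv.ofBijective (constantCoeff (σ := Fin 0) (R := R)) ⟨?_, fun a => ⟨MvPowerSeries.C a, by simp⟩⟩
  intro f g h
  ext e
  have he : e = 0 := by ext i; exact absurd i.2 (by omega)
  rw [he]
  exact h

lemma noeth [IsNoetherianRing R] : ∀ k, IsNoetherianRing (MvPowerSeries (Fin k) R) := by
  intro k
  induction k with
  | zero => exact isNoetherianRing_of_ringEquiv R (zeroEquiv R).symm
  | succ k ih =>
    haveI := ih
    haveI : IsNoetherianRing (PowerSeries (MvPowerSeries (Fin k) R)) :=
      HB.isNoetherianRing_powerSeries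
    exact isNoetherianRing_of_ringEquiv _ (splitEquiv R k).symm

/-- canonical inclusion adding one variable -/
def iota (R : Type*) [CommRing R] (k : ℕ) :
    MvPowerSeries (Fin k) R →+* MvPowerSeries (Fin (k+1)) R :=
  ((splitEquiv R k).symm : PowerSeries (MvPowerSeries (Fin k) R) →+* _).comp
    (PowerSeries.C (R := MvPowerSeries (Fin k) R))

lemma iota_coeff (k : ℕ) (f : MvPowerSeries (Fin k) R) (e : Fin (k+1) →₀ ℕ) :
    coeff (R := R) e (iota R k f) = if e (Fin.last k) = 0 then coeff (R := R) (expDown e) f else 0 := by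
  show coeff (R := R) e ((splitEquiv R k).symm (PowerSeries.C f)) = _
  rw [splitEquiv_symm_coeff, PowerSeries.coeff_C]
  split <;> simp

/-- canonical inclusion adding `c` variables -/
def inclUp (R : Type*) [CommRing R] (m : ℕ) : ∀ c : ℕ,
    MvPowerSeries (Fin m) R →+* MvPowerSeries (Fin (m + c)) R
  | 0 => RingHom.id _
  | (c+1) => (iota R (m + c)).comp (inclUp R m c)

lemma inclUp_zero (m : ℕ) (f : MvPowerSeries (Fin m) R) : inclUp R m 0 f = f := rfl

lemma inclUp_succ (m c : ℕ) (f : MvPowerSeries (Fin m) R) :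
    inclUp R m (c+1) f = iota R (m + c) (inclUp R m c f) := rfl

lemma embDomain_castLE_apply {m n : ℕ} (h : m ≤ n) (d : Fin m →₀ ℕ) (j : Fin n) :
    Finsupp.embDomain (Fin.castLEEmb h) d j = if hj : j.val < m then d ⟨j.val, hj⟩ else 0 := by
  by_cases hj : j.val < m
  · rw [dif_pos hj]
    have hje : j = (Fin.castLEEmb h) ⟨j.val, hj⟩ := by
      ext
      simp [Fin.castLEEmb, Fin.castLE]
    conv_lhs => rw [hje]
    rw [Finsupp.embDomain_apply_self]
  · rw [dif_neg hj]
    apply Finsupp.embDomain_notin_range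
    rintro ⟨a, rfl⟩
    exact hj (by simp [Fin.castLEEmb, Fin.castLE])

/-- the coefficientwise characterization of the canonical inclusion -/
def SatChar (m n : ℕ) (h : m ≤ n) (Ψ : MvPowerSeries (Fin m) R →+* MvPowerSeries (Fin n) R) :
    Prop :=
  (∀ (f : MvPowerSeries (Fin m) R) (d : Fin m →₀ ℕ),
      coeff (R := R) (d.embDomain (Fin.castLEEmb h)) (Ψ f) = coeff (R := R) d f) ∧
  (∀ (f : MvPowerSeries (Fin m) R) (e : Fin n →₀ ℕ),
      e ∉ Set.range (Finsupp.embDomain (Fin.castLEEmb h)) → coeff (R := R) e (Ψ f) = 0)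

lemma satChar_unique {m n : ℕ} {h : m ≤ n}
    {Ψ Ψ' : MvPowerSeries (Fin m) R →+* MvPowerSeries (Fin n) R}
    (hΨ : SatChar m n h Ψ) (hΨ' : SatChar m n h Ψ') : Ψ = Ψ' := by
  ext f : 1
  ext e
  by_cases he : e ∈ Set.range (Finsupp.embDomain (Fin.castLEEmb h))
  · obtain ⟨d, rfl⟩ := he
    rw [hΨ.1 f d, hΨ'.1 f d]
  · rw [hΨ.2 f e he, hΨ'.2 f e he]

lemma iota_coeff' (m c : ℕ) (f : MvPowerSeries (Fin (m + c)) R) (e : Fin (m + (c + 1)) →₀ ℕ) :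
    coeff (R := R) e (iota R (m + c) f)
      = if e (Fin.last (m + c)) = 0
          then coeff (R := R) (Finsupp.equivFunOnFinite.symm (fun i : Fin (m + c) => e i.castSucc)) f
          else 0 :=
  iota_coeff (m + c) f e

lemma satChar_inclUp (m : ℕ) : ∀ c : ℕ, SatChar (R := R) m (m + c) (by omega) (inclUp R m c) := by
  intro c
  induction c with
  | zero =>
    constructor
    · intro f d
      have : Finsupp.embDomain (Fin.castLEEmb (show m ≤ m + 0 by omega)) d = d := by
        ext j
        rw [embDomain_castLE_apply, dif_pos (show (j : ℕ) < m from j.2)]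
        rfl
      rw [this, inclUp_zero]
    · intro f e he
      exfalso
      apply he
      refine ⟨e, ?_⟩
      ext j
      rw [embDomain_castLE_apply, dif_pos (show (j : ℕ) < m from j.2)]
      rfl
  | succ c ih =>
    constructor
    · intro f d
      rw [inclUp_succ, iota_coeff' m c]
      have hlast : (Finsupp.embDomain (Fin.castLEEmb (show m ≤ m + (c+1) by omega)) d)
          (Fin.last (m + c)) = 0 := by
        rw [embDomain_castLE_apply, dif_neg]
        simp
      rw [if_pos hlast]
      have hdown : (Finsupp.equivFunOnFinite.symm (fun i : Fin (m + c) =>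
            (Finsupp.embDomain (Fin.castLEEmb (show m ≤ m + (c+1) by omega)) d) i.castSucc))
          = Finsupp.embDomain (Fin.castLEEmb (show m ≤ m + c by omega)) d := by
        ext i
        rw [Finsupp.equivFunOnFinite_symm_apply_apply, embDomain_castLE_apply,
          embDomain_castLE_apply]
        rfl
      rw [hdown, ih.1 f d]
    · intro f e he
      rw [inclUp_succ, iota_coeff' m c]
      split_ifs with hlast
      swap
      · rfl
      · apply ih.2 f
        rintro ⟨d, hd⟩
        apply he
        refine ⟨d, ?_⟩
        ext j
        refine Fin.lastCases ?_ ?_ j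
        · rw [embDomain_castLE_apply, dif_neg (by simp)]
          exact hlast.symm
        · intro i
          have h1 : e i.castSucc = (Finsupp.equivFunOnFinite.symm (fun i : Fin (m + c) =>
              e i.castSucc)) i := by
            rw [Finsupp.equivFunOnFinite_symm_apply_apply]
          rw [embDomain_castLE_apply, h1, ← hd, embDomain_castLE_apply]
          rfl

lemma finite_up {R R' A : Type*} [CommRing R] [CommRing R'] [AddCommGroup A]
    [Module R A] [Module R' A] (σ : R →+* R') (hc : ∀ (r : R) (x : A), r • x = σ r • x)
    [Module.Finite R A] : Module.Finite R' A := by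
  obtain ⟨s, hs⟩ := Module.Finite.fg_top (R := R) (M := A)
  refine ⟨⟨s, le_antisymm le_top ?_⟩⟩
  intro x _
  have hx : x ∈ Submodule.span R (↑s : Set A) := by rw [hs]; trivial
  refine Submodule.span_induction (fun y hy => Submodule.subset_span hy)
    (Submodule.zero_mem _) (fun y z _ _ hy hz => Submodule.add_mem _ hy hz)
    (fun r y _ hy => ?_) hx
  rw [hc]
  exact Submodule.smul_mem _ _ hy

lemma Q (R : Type*) [CommRing R] [IsNoetherianRing R] (m : ℕ) :
    ∀ (c : ℕ) (A : Type) [AddCommGroup A]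
      [instN : Module (MvPowerSeries (Fin (m + c)) R) A],
      letI instm : Module (MvPowerSeries (Fin m) R) A := Module.compHom A (inclUp R m c)
      ∀ [Module.Finite (MvPowerSeries (Fin m) R) A],
      idealHeight (Module.annihilator (MvPowerSeries (Fin m) R) A) + (c : ℕ∞)
        ≤ idealHeight (Module.annihilator (MvPowerSeries (Fin (m + c)) R) A) := by
  intro c
  induction c with
  | zero =>
    intro A _ instN hfin
    rw [Nat.cast_zero, add_zero]
    exact le_of_eq (by with_unfolding_all rfl)
  | succ c ih =>
    intro A _ instN hfin
    letI instN' : Module (MvPowerSeries (Fin (m + c + 1)) R) A := instN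
    letI instMid : Module (MvPowerSeries (Fin (m + c)) R) A :=
      Module.compHom A (iota R (m + c))
    letI instmc : Module (MvPowerSeries (Fin m) R) A := Module.compHom A (inclUp R m c)
    haveI hfin' : @Module.Finite (MvPowerSeries (Fin m) R) A _ _ instmc := hfin
    haveI : IsNoetherianRing (MvPowerSeries (Fin (m + c)) R) := noeth (m + c)
    have h1 : idealHeight (@Module.annihilator (MvPowerSeries (Fin m) R) A _ _ instmc)
          + (c : ℕ∞)
        ≤ idealHeight (@Module.annihilator (MvPowerSeries (Fin (m + c)) R) A _ _ instMid) :=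
      ih A
    haveI hfinMid : Module.Finite (MvPowerSeries (Fin (m + c)) R) A :=
      finite_up (inclUp R m c) (fun s x => rfl)
    have h2 : idealHeight (@Module.annihilator (MvPowerSeries (Fin (m + c)) R) A _ _ instMid)
          + 1
        ≤ idealHeight (@Module.annihilator (MvPowerSeries (Fin (m + (c + 1))) R) A _ _ instN) :=
      ONE.one_step (S := MvPowerSeries (Fin (m + c)) R)
        (T := MvPowerSeries (Fin (m + (c + 1))) R) (splitEquiv R (m + c)).symm A
        (fun s x => by with_unfolding_all rfl)
    have goal' : idealHeight (@Module.annihilator (MvPowerSeries (Fin m) R) A _ _ instmc)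
          + ((c + 1 : ℕ) : ℕ∞)
        ≤ idealHeight (@Module.annihilator (MvPowerSeries (Fin (m + (c + 1))) R) A _ _ instN) := by
      rw [Nat.cast_add, Nat.cast_one, ← add_assoc]
      exact le_trans (add_le_add_left h1 1) h2
    exact goal'

end GLUE


end

/-- Let `p` be a prime, `n ≥ m ≥ 0`, and `R_k = ℤ_p[[T_1,…,T_k]]`, with `R_m ⊆ R_n` via the
natural inclusion `Φ` sending `T_i` to `T_i` (characterized coefficientwise: the coefficient
of a monomial in the first `m` variables is preserved, and all other coefficients vanish).
If `A` is an `R_n`-module that is finitely generated over `R_m` (by restriction of scalars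
along `Φ`) and `h` is the height of the annihilator of `A` in `R_m`, then the height of the
annihilator of `A` in `R_n` is at least `h + n − m`. -/
theorem height_annihilator_mvPowerSeries_ge (p : ℕ) [Fact p.Prime] (m n : ℕ) (hmn : m ≤ n)
    (Φ : MvPowerSeries (Fin m) ℤ_[p] →+* MvPowerSeries (Fin n) ℤ_[p])
    (hΦ₁ : ∀ (f : MvPowerSeries (Fin m) ℤ_[p]) (d : Fin m →₀ ℕ),
      MvPowerSeries.coeff (R := ℤ_[p]) (d.embDomain (Fin.castLEEmb hmn)) (Φ f) =
        MvPowerSeries.coeff (R := ℤ_[p]) d f)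
    (hΦ₂ : ∀ (f : MvPowerSeries (Fin m) ℤ_[p]) (e : Fin n →₀ ℕ),
      e ∉ Set.range (Finsupp.embDomain (Fin.castLEEmb hmn)) →
        MvPowerSeries.coeff (R := ℤ_[p]) e (Φ f) = 0)
    (A : Type) [AddCommGroup A] [Module (MvPowerSeries (Fin n) ℤ_[p]) A] :
    letI : Module (MvPowerSeries (Fin m) ℤ_[p]) A := Module.compHom A Φ
    Module.Finite (MvPowerSeries (Fin m) ℤ_[p]) A →
      idealHeight (Module.annihilator (MvPowerSeries (Fin m) ℤ_[p]) A) + ((n - m : ℕ) : ℕ∞)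
        ≤ idealHeight (Module.annihilator (MvPowerSeries (Fin n) ℤ_[p]) A) := by
  intro hfin
  obtain ⟨c, rfl⟩ : ∃ c, n = m + c := ⟨n - m, by omega⟩
  have hΦ : Φ = GLUE.inclUp ℤ_[p] m c :=
    GLUE.satChar_unique ⟨hΦ₁, hΦ₂⟩ (GLUE.satChar_inclUp m c)
  subst hΦ
  have hcast : ((m + c - m : ℕ) : ℕ∞) = (c : ℕ∞) := by
    congr 1
    omega
  rw [hcast]
  exact GLUE.Q ℤ_[p] m c A
end

section
/- Let A be an abelian group, let R ⊆ A be a finite subset with |R| = r ≥ 1, and let I ⊆ A be a finite subset with |I| = s. Then there exists a subset T ⊆ I such that the translates i + R for i ∈ T are pairwise disjoint and (r² − r + 1)·|T| ≥ s; in particular, the maximal number of pairwise disjoint translates i + R with i ∈ I is at least s/(r² − r + 1). -/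
private lemma key_disj {A : Type*} [AddCommGroup A] [DecidableEq A] (R : Finset A) (i j : A)
    (h : j ∉ (insert (0:A) (R.offDiag.image fun p => p.1 - p.2)).image (i + ·)) :
    ((i + ·) '' (R : Set A)) ∩ ((j + ·) '' (R : Set A)) = ∅ := by
  ext x
  simp only [Set.mem_inter_iff, Set.mem_image, Set.mem_empty_iff_false, iff_false]
  rintro ⟨⟨a, ha, rfl⟩, ⟨b, hb, hab⟩⟩
  apply h
  simp only [Finset.mem_image, Finset.mem_insert, Finset.mem_offDiag]
  by_cases hab' : a = b
  · refine ⟨0, Or.inl rfl, ?_⟩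
    subst hab'
    have : i = j := (add_right_cancel hab).symm
    simp [this]
  · refine ⟨a - b, Or.inr ⟨⟨a, b⟩, ⟨ha, hb, hab'⟩, rfl⟩, ?_⟩
    rw [← add_sub_assoc, ← hab, add_sub_cancel_right]

/-- Let `A` be an abelian group, `R ⊆ A` a finite subset with `|R| = r ≥ 1`, and `I ⊆ A` a
finite subset with `|I| = s`.  Then there exists a subset `T ⊆ I` such that the translates
`i + R` for `i ∈ T` are pairwise disjoint and `(r² − r + 1)·|T| ≥ s`. -/
theorem exists_disjoint_translates {A : Type*} [AddCommGroup A] (R I : Finset A)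
    (hR : 1 ≤ R.card) :
    ∃ T ⊆ I, (∀ i ∈ T, ∀ j ∈ T, i ≠ j →
        ((i + ·) '' (R : Set A)) ∩ ((j + ·) '' (R : Set A)) = ∅) ∧
      (R.card ^ 2 - R.card + 1) * T.card ≥ I.card := by
  classical
  induction I using Finset.strongInduction with
  | _ I ih =>
    rcases I.eq_empty_or_nonempty with rfl | ⟨i, hi⟩
    · exact ⟨∅, Finset.Subset.refl _, by simp, by simp⟩
    · set D : Finset A := insert (0:A) (R.offDiag.image fun p => p.1 - p.2) with hD
      set S : Finset A := D.image (i + ·) with hS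
      have hiS : i ∈ S := by
        simp only [hS, Finset.mem_image]
        exact ⟨0, Finset.mem_insert_self _ _, by simp⟩
      have hJ : I \ S ⊂ I := by
        rw [Finset.ssubset_iff_of_subset (Finset.sdiff_subset)]
        exact ⟨i, hi, fun h => (Finset.mem_sdiff.mp h).2 hiS⟩
      obtain ⟨T', hT'sub, hT'disj, hT'card⟩ := ih (I \ S) hJ
      have hinotT' : i ∉ T' := fun h => (Finset.mem_sdiff.mp (hT'sub h)).2 hiS
      refine ⟨insert i T', ?_, ?_, ?_⟩
      · intro x hx
        rcases Finset.mem_insert.mp hx with rfl | hx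
        · exact hi
        · exact (Finset.mem_sdiff.mp (hT'sub hx)).1
      · have hkey : ∀ x ∈ T', ((i + ·) '' (R : Set A)) ∩ ((x + ·) '' (R : Set A)) = ∅ :=
          fun x hx => key_disj R i x (Finset.mem_sdiff.mp (hT'sub hx)).2
        intro a ha b hb hne
        rcases Finset.mem_insert.mp ha with rfl | ha'
        · rcases Finset.mem_insert.mp hb with h | hb'
          · exact absurd h.symm hne
          · exact hkey b hb'
        · rcases Finset.mem_insert.mp hb with h | hb'
          · subst h
            rw [Set.inter_comm]
            exact hkey a ha'
          · exact hT'disj a ha' b hb' hne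
      · have hScard : S.card ≤ R.card ^ 2 - R.card + 1 := by
          calc S.card ≤ D.card := Finset.card_image_le
            _ ≤ (R.offDiag.image fun p => p.1 - p.2).card + 1 :=
              Finset.card_insert_le _ _
            _ ≤ R.offDiag.card + 1 := by
              exact Nat.add_le_add_right Finset.card_image_le 1
            _ = R.card ^ 2 - R.card + 1 := by
              rw [Finset.offDiag_card, sq]
        have hIcard : I.card ≤ (I \ S).card + S.card := by
          calc I.card ≤ (I ∪ S).card := Finset.card_le_card Finset.subset_union_left
            _ = (I \ S).card + S.card := by
              rw [← Finset.card_sdiff_add_card]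
        have hTcard : (insert i T').card = T'.card + 1 :=
          Finset.card_insert_of_notMem hinotT'
        rw [hTcard, Nat.mul_add, Nat.mul_one]
        calc I.card ≤ (I \ S).card + S.card := hIcard
          _ ≤ (R.card ^ 2 - R.card + 1) * T'.card + (R.card ^ 2 - R.card + 1) :=
            Nat.add_le_add hT'card hScard
end
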